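/- arXiv:2506.19784 — 4 statements merged into one kernel-verified Lean document; each statement's English description precedes it below -/
import Mathlib

section
/- Let γ > 1 and x̄ > 0 be real numbers, and suppose γ ≥ 2. Then there exists a constant ν₁ > 0 (depending on γ and x̄) such that for all x ≥ 0, x^γ - γ·x·x̄^(γ-1) + (γ-1)·x̄^γ ≥ ν₁·|x - x̄|². -/
open Real

theorem stmt_0 (γ xb : ℝ) (hγ : 1 < γ) (hγ2 : 2 ≤ γ) (hxb : 0 < xb) :
    ∃ ν₁ > (0 : ℝ), ∀ x : ℝ, 0 ≤ x →
      x ^ γ - γ * x * xb ^ (γ - 1) + (γ - 1) * xb ^ γ ≥ ν₁ * |x - xb| ^ 2 := by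
  have hγ0 : (0:ℝ) < γ := by linarith
  set ν : ℝ := γ * xb ^ (γ - 2) / 2 with hνdef
  have hν0 : 0 < ν := by positivity
  refine ⟨ν, hν0, ?_⟩
  set g : ℝ → ℝ := fun x => x ^ γ - γ * x * xb ^ (γ - 1) + (γ - 1) * xb ^ γ
      - ν * (x - xb) ^ 2 with hg
  have hderiv : ∀ x : ℝ,
      HasDerivAt g (γ * x ^ (γ - 1) - γ * xb ^ (γ - 1) - ν * (2 * (x - xb))) x := by
    intro x
    have h1 : HasDerivAt (fun x : ℝ => x ^ γ) (γ * x ^ (γ - 1)) x :=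
      Real.hasDerivAt_rpow_const (Or.inr (by linarith))
    have h2 : HasDerivAt (fun x : ℝ => γ * x * xb ^ (γ - 1)) (γ * xb ^ (γ - 1)) x := by
      have := ((hasDerivAt_id x).const_mul γ).mul_const (xb ^ (γ - 1))
      simpa using this
    have h3 : HasDerivAt (fun x : ℝ => (x - xb) ^ 2) (2 * (x - xb)) x := by
      have := ((hasDerivAt_id x).sub_const xb).fun_pow 2
      simpa using this
    exact ((h1.sub h2).add_const ((γ - 1) * xb ^ γ)).sub (h3.const_mul ν)
  have hdiff : Differentiable ℝ g := fun x => (hderiv x).differentiableAt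
  have hxbrw : xb ^ (γ - 1) = xb ^ (γ - 2) * xb := by
    rw [← Real.rpow_add_one hxb.ne' (γ - 2)]; ring_nf
  have hxbfull : xb ^ γ = xb ^ (γ - 1) * xb := by
    rw [← Real.rpow_add_one hxb.ne' (γ - 1)]; ring_nf
  have hgxb : g xb = 0 := by
    simp only [hg]
    nlinarith [hxbfull]
  -- key inequality on (0, xb]: x^(γ-1) ≤ xb^(γ-2) * x
  have hanti : AntitoneOn g (Set.Icc 0 xb) := by
    apply antitoneOn_of_deriv_nonpos (convex_Icc 0 xb) hdiff.continuous.continuousOn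
    · exact fun x hx => (hdiff x).differentiableWithinAt
    · intro x hx
      rw [interior_Icc] at hx
      rw [(hderiv x).deriv]
      have hx0 : 0 < x := hx.1
      have hxle : x ≤ xb := le_of_lt hx.2
      have hpow : x ^ (γ - 2) ≤ xb ^ (γ - 2) :=
        Real.rpow_le_rpow hx0.le hxle (by linarith)
      have hxrw : x ^ (γ - 1) = x ^ (γ - 2) * x := by
        rw [← Real.rpow_add_one hx0.ne' (γ - 2)]; ring_nf
      have h2ν : ν * 2 = γ * xb ^ (γ - 2) := by rw [hνdef]; ring
      nlinarith [mul_le_mul_of_nonneg_right hpow hx0.le, hxrw, hxbrw, hγ0, hν0]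
  have hmono : MonotoneOn g (Set.Ici xb) := by
    apply monotoneOn_of_deriv_nonneg (convex_Ici xb) hdiff.continuous.continuousOn
    · exact fun x hx => (hdiff x).differentiableWithinAt
    · intro x hx
      rw [interior_Ici] at hx
      rw [(hderiv x).deriv]
      have hx0 : 0 < x := lt_trans hxb hx
      have hpow : xb ^ (γ - 2) ≤ x ^ (γ - 2) :=
        Real.rpow_le_rpow hxb.le (le_of_lt hx) (by linarith)
      have hxrw : x ^ (γ - 1) = x ^ (γ - 2) * x := by
        rw [← Real.rpow_add_one hx0.ne' (γ - 2)]; ring_nf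
      have h2ν : ν * 2 = γ * xb ^ (γ - 2) := by rw [hνdef]; ring
      nlinarith [mul_le_mul_of_nonneg_right hpow hx0.le, hxrw, hxbrw, hγ0, hν0]
  intro x hx
  have hgx : 0 ≤ g x := by
    rcases le_total x xb with h | h
    · have := hanti ⟨hx, h⟩ ⟨hxb.le, le_refl xb⟩ h
      rw [hgxb] at this; exact this
    · have := hmono (Set.self_mem_Ici) h h
      rw [hgxb] at this; exact this
  have habs : |x - xb| ^ 2 = (x - xb) ^ 2 := sq_abs _
  rw [ge_iff_le, habs]
  simp only [hg] at hgx
  linarith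
end

section
/- Let 1 < γ < 2, x̄ > 0, and R > x̄. Then there exists a constant ν₃ > 0 (depending on γ, R, x̄) such that for all x > R, x^γ - γ·x·x̄^(γ-1) + (γ-1)·x̄^γ ≥ ν₃·|x - x̄|^γ. -/
open Real Set

theorem stmt_1 (γ xb R : ℝ) (hγ1 : 1 < γ) (hγ2 : γ < 2) (hxb : 0 < xb) (hR : xb < R) :
    ∃ ν₃ > (0 : ℝ), ∀ x : ℝ, R < x →
      x ^ γ - γ * x * xb ^ (γ - 1) + (γ - 1) * xb ^ γ ≥ ν₃ * |x - xb| ^ γ := by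
  have hγ0 : 0 < γ - 1 := by linarith
  have hR0 : 0 < R := hxb.trans hR
  set D : ℝ → ℝ := fun x => x ^ γ - γ * x * xb ^ (γ - 1) + (γ - 1) * xb ^ γ with hDdef
  -- derivative of D
  have hD' : ∀ x : ℝ, 0 < x →
      HasDerivAt D (γ * x ^ (γ - 1) - γ * xb ^ (γ - 1)) x := by
    intro x hx
    have h1 := Real.hasDerivAt_rpow_const (x := x) (p := γ) (Or.inl hx.ne')
    have h2 : HasDerivAt (fun x : ℝ => γ * x * xb ^ (γ - 1)) (γ * xb ^ (γ - 1)) x := by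
      simpa [mul_comm, mul_assoc] using
        ((hasDerivAt_id x).const_mul γ).mul_const (xb ^ (γ - 1))
    simpa [hDdef] using (h1.sub h2).add_const ((γ - 1) * xb ^ γ)
  -- D is strictly monotone on Ici xb
  have hDmono : StrictMonoOn D (Ici xb) := by
    apply strictMonoOn_of_deriv_pos (convex_Ici xb)
    · exact fun x hx => ((hD' x (hxb.trans_le hx)).continuousAt).continuousWithinAt
    · intro x hx
      rw [interior_Ici] at hx
      rw [(hD' x (hxb.trans hx)).deriv]
      have : xb ^ (γ - 1) < x ^ (γ - 1) := Real.rpow_lt_rpow hxb.le hx hγ0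
      nlinarith [hγ1]
  have hDxb : D xb = 0 := by
    have : xb ^ γ = xb * xb ^ (γ - 1) := by
      rw [show γ = 1 + (γ - 1) by ring, Real.rpow_add hxb, Real.rpow_one]
      ring_nf
    simp only [hDdef]
    rw [this]; ring
  have hDR : 0 < D R := by
    have := hDmono (self_mem_Ici) (le_of_lt hR) hR
    rwa [hDxb] at this
  -- key constant ν₀
  set ν₁ : ℝ := (R ^ (γ - 1) - xb ^ (γ - 1)) / (2 * R - xb) ^ (γ - 1) with hν₁
  set ν₂ : ℝ := 1 - 2 ^ (1 - γ) with hν₂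
  have hν₁pos : 0 < ν₁ := by
    apply div_pos
    · have := Real.rpow_lt_rpow hxb.le hR hγ0
      linarith
    · exact Real.rpow_pos_of_pos (by linarith) _
  have hν₂pos : 0 < ν₂ := by
    have : (2 : ℝ) ^ (1 - γ) < 1 :=
      Real.rpow_lt_one_of_one_lt_of_neg one_lt_two (by linarith)
    simp [hν₂]; linarith
  set ν₀ : ℝ := min ν₁ ν₂ with hν₀
  have hν₀pos : 0 < ν₀ := lt_min hν₁pos hν₂pos
  -- key pointwise bound
  have hkey : ∀ x : ℝ, R ≤ x → ν₀ * (x - xb) ^ (γ - 1) ≤ x ^ (γ - 1) - xb ^ (γ - 1) := by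
    intro x hx
    have hxpos : 0 < x := hR0.trans_le hx
    have hxxb : 0 < x - xb := by linarith
    rcases le_total x (2 * R) with h2 | h2
    · -- R ≤ x ≤ 2R
      have hA : (x - xb) ^ (γ - 1) ≤ (2 * R - xb) ^ (γ - 1) :=
        Real.rpow_le_rpow hxxb.le (by linarith) hγ0.le
      have hB : R ^ (γ - 1) ≤ x ^ (γ - 1) := Real.rpow_le_rpow hR0.le hx hγ0.le
      have hpos : 0 < (2 * R - xb) ^ (γ - 1) := Real.rpow_pos_of_pos (by linarith) _
      have h1 : ν₀ * (x - xb) ^ (γ - 1) ≤ ν₁ * (2 * R - xb) ^ (γ - 1) := by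
        apply mul_le_mul (min_le_left _ _) hA (Real.rpow_nonneg hxxb.le _) hν₁pos.le
      have h2' : ν₁ * (2 * R - xb) ^ (γ - 1) = R ^ (γ - 1) - xb ^ (γ - 1) := by
        rw [hν₁, div_mul_cancel₀ _ hpos.ne']
      linarith
    · -- x ≥ 2R
      have hxb2 : xb ≤ x / 2 := by linarith
      have hA : xb ^ (γ - 1) ≤ (x / 2) ^ (γ - 1) :=
        Real.rpow_le_rpow hxb.le hxb2 hγ0.le
      have hsplit : (x / 2) ^ (γ - 1) = x ^ (γ - 1) * 2 ^ (1 - γ) := by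
        rw [Real.div_rpow hxpos.le (by norm_num), show (1 - γ) = -(γ - 1) by ring,
          Real.rpow_neg (by norm_num), div_eq_mul_inv]
      have hB : (x - xb) ^ (γ - 1) ≤ x ^ (γ - 1) :=
        Real.rpow_le_rpow hxxb.le (by linarith) hγ0.le
      have hxp : 0 < x ^ (γ - 1) := Real.rpow_pos_of_pos hxpos _
      have h1 : ν₀ * (x - xb) ^ (γ - 1) ≤ ν₂ * x ^ (γ - 1) := by
        apply mul_le_mul (min_le_right _ _) hB (Real.rpow_nonneg hxxb.le _) hν₂pos.le
      have : ν₂ * x ^ (γ - 1) ≤ x ^ (γ - 1) - xb ^ (γ - 1) := by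
        rw [hν₂]
        nlinarith [hA, hsplit]
      linarith
  -- choose ν
  set ν : ℝ := min ν₀ (D R / (R - xb) ^ γ) with hν
  have hRxb : 0 < R - xb := by linarith
  have hRpow : 0 < (R - xb) ^ γ := Real.rpow_pos_of_pos hRxb _
  have hνpos : 0 < ν := lt_min hν₀pos (div_pos hDR hRpow)
  refine ⟨ν, hνpos, ?_⟩
  -- g monotone
  set g : ℝ → ℝ := fun x => D x - ν * (x - xb) ^ γ with hg
  have hg' : ∀ x : ℝ, R ≤ x →
      HasDerivAt g (γ * x ^ (γ - 1) - γ * xb ^ (γ - 1) - ν * (γ * (x - xb) ^ (γ - 1))) x := by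
    intro x hx
    have hxpos : 0 < x := hR0.trans_le hx
    have h1 : HasDerivAt (fun x : ℝ => (x - xb) ^ γ) (γ * (x - xb) ^ (γ - 1)) x := by
      have hs : HasDerivAt (fun x : ℝ => x - xb) 1 x := (hasDerivAt_id x).sub_const xb
      have := hs.rpow_const (p := γ) (Or.inl (by linarith : (0:ℝ) < x - xb).ne')
      simpa [mul_comm] using this
    exact (hD' x hxpos).sub (h1.const_mul ν)
  have hgmono : MonotoneOn g (Ici R) := by
    apply monotoneOn_of_deriv_nonneg (convex_Ici R)
    · exact fun x hx => ((hg' x hx).continuousAt).continuousWithinAt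
    · intro x hx
      rw [interior_Ici] at hx
      exact (hg' x hx.le).differentiableAt.differentiableWithinAt
    · intro x hx
      rw [interior_Ici] at hx
      rw [(hg' x hx.le).deriv]
      have hk := hkey x hx.le
      have hν0 : ν ≤ ν₀ := min_le_left _ _
      have hp : 0 ≤ (x - xb) ^ (γ - 1) :=
        Real.rpow_nonneg (by linarith [hR.trans hx] : (0:ℝ) ≤ x - xb) _
      nlinarith [mul_le_mul_of_nonneg_right hν0 hp]
  have hgR : 0 ≤ g R := by
    have : ν * (R - xb) ^ γ ≤ D R := by
      rw [hν]
      calc min ν₀ (D R / (R - xb) ^ γ) * (R - xb) ^ γ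
          ≤ (D R / (R - xb) ^ γ) * (R - xb) ^ γ :=
            mul_le_mul_of_nonneg_right (min_le_right _ _) hRpow.le
        _ = D R := by field_simp
    simp only [hg]; linarith
  intro x hx
  have hxR : R ≤ x := hx.le
  have habs : |x - xb| = x - xb := abs_of_pos (by linarith)
  have := hgmono self_mem_Ici (mem_Ici.mpr hxR) hxR
  have hgx : 0 ≤ g x := le_trans hgR this
  simp only [hg, hDdef] at hgx
  rw [habs]
  linarith
end

section
/- Let 1 < γ < 2, x̄ > 0, and R > x̄. Then there exists a constant ν₂ > 0 (depending on γ, R, x̄) such that for all x with 0 ≤ x ≤ R, x^γ - γ·x·x̄^(γ-1) + (γ-1)·x̄^γ ≥ ν₂·|x - x̄|². -/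
open Real

theorem stmt_2 (γ xb R : ℝ) (hγ1 : 1 < γ) (hγ2 : γ < 2) (hxb : 0 < xb) (hR : xb < R) :
    ∃ ν₂ > (0 : ℝ), ∀ x : ℝ, 0 ≤ x → x ≤ R →
      x ^ γ - γ * x * xb ^ (γ - 1) + (γ - 1) * xb ^ γ ≥ ν₂ * |x - xb| ^ 2 := by
  have hR0 : 0 < R := hxb.trans hR
  set c : ℝ := γ * (γ - 1) * R ^ (γ - 2) / 2 with hc
  have hcpos : 0 < c := by
    have h1 : (0:ℝ) < R ^ (γ - 2) := Real.rpow_pos_of_pos hR0 _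
    have h2 : (0:ℝ) < γ - 1 := by linarith
    positivity
  set h : ℝ → ℝ := fun x => x ^ γ - γ * x * xb ^ (γ - 1) + (γ - 1) * xb ^ γ - c * (x - xb) ^ 2
    with hdef
  set φ : ℝ → ℝ := fun y => γ * y ^ (γ - 1) - γ * xb ^ (γ - 1) - 2 * c * (y - xb) with hφdef
  have hderiv : ∀ y : ℝ, HasDerivAt h (φ y) y := by
    intro y
    have h1 : HasDerivAt (fun x : ℝ => x ^ γ) (γ * y ^ (γ - 1)) y :=
      Real.hasDerivAt_rpow_const (Or.inr hγ1.le)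
    have h2 : HasDerivAt (fun x : ℝ => γ * x * xb ^ (γ - 1)) (γ * xb ^ (γ - 1)) y := by
      simpa [mul_comm, mul_assoc] using
        ((hasDerivAt_id y).const_mul γ).mul_const (xb ^ (γ - 1))
    have h3 : HasDerivAt (fun x : ℝ => c * (x - xb) ^ 2) (2 * c * (y - xb)) y := by
      have := (((hasDerivAt_id y).sub_const xb).pow 2).const_mul c
      simpa [mul_comm, mul_assoc, mul_left_comm] using this
    simpa [hdef, hφdef, Pi.sub_def] using ((h1.sub h2).add_const ((γ - 1) * xb ^ γ)).sub h3
  have hφderiv : ∀ y : ℝ, 0 < y →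
      HasDerivAt φ (γ * ((γ - 1) * y ^ (γ - 2)) - 2 * c) y := by
    intro y hy
    have h1 : HasDerivAt (fun x : ℝ => x ^ (γ - 1)) ((γ - 1) * y ^ (γ - 1 - 1)) y :=
      Real.hasDerivAt_rpow_const (Or.inl hy.ne')
    have h2 : HasDerivAt (fun x : ℝ => 2 * c * (x - xb)) (2 * c) y := by
      simpa using ((hasDerivAt_id y).sub_const xb).const_mul (2 * c)
    have : γ - 1 - 1 = γ - 2 := by ring
    rw [this] at h1
    simpa [hφdef, Pi.sub_def] using ((h1.const_mul γ).sub_const (γ * xb ^ (γ - 1))).sub h2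
  -- φ is monotone on [0, R]
  have hφcont : ContinuousOn φ (Set.Icc 0 R) := by
    intro y _
    have c1 : ContinuousAt (fun x : ℝ => γ * x ^ (γ - 1)) y :=
      (Real.continuousAt_rpow_const y (γ - 1) (Or.inr (by linarith))).const_mul γ
    have c2 : ContinuousAt (fun x : ℝ => 2 * c * (x - xb)) y := by fun_prop
    exact ((c1.sub continuousAt_const).sub c2).continuousWithinAt
  have hφmono : MonotoneOn φ (Set.Icc 0 R) := by
    apply monotoneOn_of_deriv_nonneg (convex_Icc 0 R) hφcont
    · intro y hy
      rw [interior_Icc] at hy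
      exact (hφderiv y hy.1).differentiableAt.differentiableWithinAt
    · intro y hy
      rw [interior_Icc] at hy
      rw [(hφderiv y hy.1).deriv]
      have hle : R ^ (γ - 2) ≤ y ^ (γ - 2) :=
        Real.rpow_le_rpow_of_nonpos hy.1 hy.2.le (by linarith)
      have h2 : 0 < γ - 1 := by linarith
      have : 2 * c ≤ γ * ((γ - 1) * y ^ (γ - 2)) := by
        rw [hc]
        have := mul_le_mul_of_nonneg_left hle (by nlinarith : (0:ℝ) ≤ γ * (γ - 1))
        nlinarith
      linarith
  have hφxb : φ xb = 0 := by simp [hφdef]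
  have hxbmem : xb ∈ Set.Icc (0:ℝ) R := ⟨hxb.le, hR.le⟩
  have hcont : Continuous h := by
    have : Differentiable ℝ h := fun y => (hderiv y).differentiableAt
    exact this.continuous
  -- h is antitone on [0, xb] and monotone on [xb, R]
  have hanti : AntitoneOn h (Set.Icc 0 xb) := by
    apply antitoneOn_of_deriv_nonpos (convex_Icc 0 xb) hcont.continuousOn
      (fun y _ => (hderiv y).differentiableAt.differentiableWithinAt)
    intro y hy
    rw [interior_Icc] at hy
    rw [(hderiv y).deriv]
    have : φ y ≤ φ xb := hφmono ⟨hy.1.le, hy.2.le.trans hR.le⟩ hxbmem hy.2.le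
    linarith [hφxb ▸ this]
  have hmono : MonotoneOn h (Set.Icc xb R) := by
    apply monotoneOn_of_deriv_nonneg (convex_Icc xb R) hcont.continuousOn
      (fun y _ => (hderiv y).differentiableAt.differentiableWithinAt)
    intro y hy
    rw [interior_Icc] at hy
    rw [(hderiv y).deriv]
    have : φ xb ≤ φ y := hφmono hxbmem ⟨(hxb.trans hy.1).le, hy.2.le⟩ hy.1.le
    linarith [hφxb ▸ this]
  have hhxb : h xb = 0 := by
    have hxbγ : xb * xb ^ (γ - 1) = xb ^ γ := by
      rw [show γ = 1 + (γ - 1) by ring, Real.rpow_add hxb, Real.rpow_one]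
      ring_nf
    simp only [hdef]
    nlinarith [hxbγ]
  refine ⟨c, hcpos, fun x hx0 hxR => ?_⟩
  have hhx : 0 ≤ h x := by
    rcases le_total x xb with hle | hle
    · have := hanti ⟨hx0, hle⟩ ⟨hxb.le, le_refl xb⟩ hle
      -- h xb ≤ h x
      rw [hhxb] at this; exact this
    · have := hmono ⟨le_refl xb, hR.le⟩ ⟨hle, hxR⟩ hle
      rw [hhxb] at this; exact this
  have habs : |x - xb| ^ 2 = (x - xb) ^ 2 := sq_abs _
  simp only [hdef] at hhx
  rw [ge_iff_le, habs]
  linarith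
end

section
/- Let γ > 1, f̄ > 0, δ > 0. Define Π(f) := f^γ - γ·f̄^(γ-1)·f + (γ-1)·f̄^γ and Z(f) := |f - f̄|²·𝟙_{|f-f̄| ≤ δ} + |f - f̄|^γ·𝟙_{|f-f̄| > δ} for f ≥ 0. Then there exist constants κ₁, κ₂ > 0, depending only on (f̄, γ, δ), such that κ₁·Z(f) ≤ Π(f) ≤ κ₂·Z(f) for all f ≥ 0. -/
open Real Set


lemma tangent_aux {f f' : ℝ → ℝ} {a b x y : ℝ}
    (hd : ∀ t ∈ Set.Icc a b, HasDerivAt f (f' t) t)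
    (hmono : MonotoneOn f' (Set.Icc a b))
    (hx : x ∈ Set.Icc a b) (hy : y ∈ Set.Icc a b) :
    f y + f' y * (x - y) ≤ f x := by
  set g : ℝ → ℝ := fun t => f t - f' y * t with hg
  have hdg : ∀ t ∈ Set.Icc a b, HasDerivAt g (f' t - f' y) t := by
    intro t ht
    exact ((hd t ht).sub ((hasDerivAt_id t).const_mul (f' y))).congr_deriv (by simp)
  rcases le_total y x with h | h
  · have hsub : Set.Icc y x ⊆ Set.Icc a b := Set.Icc_subset_Icc hy.1 hx.2
    have key : MonotoneOn g (Set.Icc y x) := by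
      apply monotoneOn_of_deriv_nonneg (convex_Icc _ _)
      · exact fun t ht => (hdg t (hsub ht)).continuousAt.continuousWithinAt
      · exact fun t ht =>
          (hdg t (hsub (interior_subset ht))).differentiableAt.differentiableWithinAt
      · intro t ht
        rw [(hdg t (hsub (interior_subset ht))).deriv]
        rw [interior_Icc] at ht
        have := hmono hy (hsub ⟨ht.1.le, ht.2.le⟩) ht.1.le
        linarith
    have := key (Set.left_mem_Icc.2 h) (Set.right_mem_Icc.2 h) h
    simp only [hg] at this
    nlinarith [this]
  · have hsub : Set.Icc x y ⊆ Set.Icc a b := Set.Icc_subset_Icc hx.1 hy.2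
    have key : AntitoneOn g (Set.Icc x y) := by
      apply antitoneOn_of_deriv_nonpos (convex_Icc _ _)
      · exact fun t ht => (hdg t (hsub ht)).continuousAt.continuousWithinAt
      · exact fun t ht =>
          (hdg t (hsub (interior_subset ht))).differentiableAt.differentiableWithinAt
      · intro t ht
        rw [(hdg t (hsub (interior_subset ht))).deriv]
        rw [interior_Icc] at ht
        have := hmono (hsub ⟨ht.1.le, ht.2.le⟩) hy ht.2.le
        linarith
    have := key (Set.left_mem_Icc.2 h) (Set.right_mem_Icc.2 h) h
    simp only [hg] at this
    nlinarith [this]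


lemma bregman_lower (γ c : ℝ) {a b x y : ℝ} (ha : 0 < a)
    (hc : ∀ t ∈ Set.Icc a b, c ≤ γ * (γ - 1) * t ^ (γ - 2))
    (hx : x ∈ Set.Icc a b) (hy : y ∈ Set.Icc a b) :
    c / 2 * (x - y) ^ 2 ≤ x ^ γ - y ^ γ - γ * y ^ (γ - 1) * (x - y) := by
  have hpos : ∀ t ∈ Set.Icc a b, (0:ℝ) < t := fun t ht => lt_of_lt_of_le ha ht.1
  set f : ℝ → ℝ := fun t => t ^ γ - c / 2 * t ^ 2 with hf
  set f' : ℝ → ℝ := fun t => γ * t ^ (γ - 1) - c * t with hf'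
  have hd : ∀ t ∈ Set.Icc a b, HasDerivAt f (f' t) t := by
    intro t ht
    have h1 : HasDerivAt (fun s : ℝ => s ^ γ) (γ * t ^ (γ - 1)) t :=
      Real.hasDerivAt_rpow_const (Or.inl (hpos t ht).ne')
    have h2 : HasDerivAt (fun s : ℝ => c / 2 * s ^ 2) (c / 2 * (2 * t)) t := by
      simpa using (hasDerivAt_pow 2 t).const_mul (c / 2)
    have h3 := h1.sub h2
    refine h3.congr_deriv ?_
    simp only [hf']
    ring
  have hd' : ∀ t ∈ Set.Icc a b, HasDerivAt f' (γ * (γ - 1) * t ^ (γ - 2) - c) t := by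
    intro t ht
    have h1 : HasDerivAt (fun s : ℝ => s ^ (γ - 1)) ((γ - 1) * t ^ (γ - 1 - 1)) t :=
      Real.hasDerivAt_rpow_const (Or.inl (hpos t ht).ne')
    have h2 := (h1.const_mul γ).sub ((hasDerivAt_id t).const_mul c)
    refine h2.congr_deriv ?_
    rw [show γ - 1 - 1 = γ - 2 by ring]
    ring
  have hmono : MonotoneOn f' (Set.Icc a b) := by
    apply monotoneOn_of_deriv_nonneg (convex_Icc a b)
    · exact fun t ht => (hd' t ht).continuousAt.continuousWithinAt
    · exact fun t ht =>
        (hd' t (interior_subset ht)).differentiableAt.differentiableWithinAt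
    · intro t ht
      rw [(hd' t (interior_subset ht)).deriv]
      have := hc t (interior_subset ht)
      linarith
  have h := tangent_aux hd hmono hx hy
  simp only [hf, hf'] at h
  nlinarith [h]

lemma bregman_upper (γ C : ℝ) {a b x y : ℝ} (ha : 0 < a)
    (hC : ∀ t ∈ Set.Icc a b, γ * (γ - 1) * t ^ (γ - 2) ≤ C)
    (hx : x ∈ Set.Icc a b) (hy : y ∈ Set.Icc a b) :
    x ^ γ - y ^ γ - γ * y ^ (γ - 1) * (x - y) ≤ C / 2 * (x - y) ^ 2 := by
  have hpos : ∀ t ∈ Set.Icc a b, (0:ℝ) < t := fun t ht => lt_of_lt_of_le ha ht.1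
  set f : ℝ → ℝ := fun t => C / 2 * t ^ 2 - t ^ γ with hf
  set f' : ℝ → ℝ := fun t => C * t - γ * t ^ (γ - 1) with hf'
  have hd : ∀ t ∈ Set.Icc a b, HasDerivAt f (f' t) t := by
    intro t ht
    have h1 : HasDerivAt (fun s : ℝ => s ^ γ) (γ * t ^ (γ - 1)) t :=
      Real.hasDerivAt_rpow_const (Or.inl (hpos t ht).ne')
    have h2 : HasDerivAt (fun s : ℝ => C / 2 * s ^ 2) (C / 2 * (2 * t)) t := by
      simpa using (hasDerivAt_pow 2 t).const_mul (C / 2)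
    have h3 := h2.sub h1
    refine h3.congr_deriv ?_
    simp only [hf']
    ring
  have hd' : ∀ t ∈ Set.Icc a b, HasDerivAt f' (C - γ * (γ - 1) * t ^ (γ - 2)) t := by
    intro t ht
    have h1 : HasDerivAt (fun s : ℝ => s ^ (γ - 1)) ((γ - 1) * t ^ (γ - 1 - 1)) t :=
      Real.hasDerivAt_rpow_const (Or.inl (hpos t ht).ne')
    have h2 := ((hasDerivAt_id t).const_mul C).sub (h1.const_mul γ)
    refine h2.congr_deriv ?_
    rw [show γ - 1 - 1 = γ - 2 by ring]
    ring
  have hmono : MonotoneOn f' (Set.Icc a b) := by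
    apply monotoneOn_of_deriv_nonneg (convex_Icc a b)
    · exact fun t ht => (hd' t ht).continuousAt.continuousWithinAt
    · exact fun t ht =>
        (hd' t (interior_subset ht)).differentiableAt.differentiableWithinAt
    · intro t ht
      rw [(hd' t (interior_subset ht)).deriv]
      have := hC t (interior_subset ht)
      linarith
  have h := tangent_aux hd hmono hx hy
  simp only [hf, hf'] at h
  nlinarith [h]


lemma rpow_mem_bounds {a b t : ℝ} (ha : 0 < a) (ht : t ∈ Set.Icc a b) (e : ℝ) :
    min (a ^ e) (b ^ e) ≤ t ^ e ∧ t ^ e ≤ max (a ^ e) (b ^ e) := by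
  rcases le_total 0 e with he | he
  · constructor
    · exact le_trans (min_le_left _ _) (Real.rpow_le_rpow ha.le ht.1 he)
    · exact le_trans (Real.rpow_le_rpow (ha.trans_le ht.1).le ht.2 he) (le_max_right _ _)
  · constructor
    · exact le_trans (min_le_right _ _) (Real.rpow_le_rpow_of_nonpos (ha.trans_le ht.1) ht.2 he)
    · exact le_trans (Real.rpow_le_rpow_of_nonpos ha ht.1 he) (le_max_left _ _)

set_option maxHeartbeats 1000000 in
theorem stmt_3 (γ fb δ : ℝ) (hγ : 1 < γ) (hfb : 0 < fb) (hδ : 0 < δ) :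
    ∃ κ₁ > (0 : ℝ), ∃ κ₂ > (0 : ℝ), ∀ f : ℝ, 0 ≤ f →
      κ₁ * (if |f - fb| ≤ δ then |f - fb| ^ 2 else |f - fb| ^ γ)
          ≤ f ^ γ - γ * fb ^ (γ - 1) * f + (γ - 1) * fb ^ γ ∧
      f ^ γ - γ * fb ^ (γ - 1) * f + (γ - 1) * fb ^ γ
          ≤ κ₂ * (if |f - fb| ≤ δ then |f - fb| ^ 2 else |f - fb| ^ γ) := by
  have hγ0 : (0:ℝ) < γ := by linarith
  have hγ1 : (0:ℝ) < γ - 1 := by linarith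
  set a := (γ - 1) / (2 * γ) * fb with ha_def
  have ha : 0 < a := mul_pos (div_pos hγ1 (by linarith)) hfb
  have haf : a < fb := by
    have h1 : (γ - 1) / (2 * γ) < 1 := by rw [div_lt_one (by linarith)]; linarith
    calc a < 1 * fb := mul_lt_mul_of_pos_right h1 hfb
      _ = fb := one_mul fb
  set T := (2 * γ) ^ (1 / (γ - 1)) * fb with hT_def
  have hT : 0 < T := mul_pos (Real.rpow_pos_of_pos (by linarith) _) hfb
  set b := fb + δ + T with hb_def
  have hfb_le_b : fb ≤ b := by linarith
  have hbpos : 0 < b := by linarith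
  have hfbI : fb ∈ Set.Icc a b := ⟨haf.le, hfb_le_b⟩
  set m := min (a ^ (γ - 2)) (b ^ (γ - 2)) with hm_def
  set M := max (a ^ (γ - 2)) (b ^ (γ - 2)) with hM_def
  have hm : 0 < m := lt_min (Real.rpow_pos_of_pos ha _) (Real.rpow_pos_of_pos hbpos _)
  set k := γ * (γ - 1) * m with hk_def
  set K := γ * (γ - 1) * M with hK_def
  have hk : 0 < k := mul_pos (mul_pos hγ0 hγ1) hm
  have hK : 0 < K :=
    lt_of_lt_of_le hk (mul_le_mul_of_nonneg_left (min_le_max) (by positivity))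
  have hc_low : ∀ t ∈ Set.Icc a b, k ≤ γ * (γ - 1) * t ^ (γ - 2) := fun t ht =>
    mul_le_mul_of_nonneg_left (rpow_mem_bounds ha ht _).1 (by positivity)
  have hc_up : ∀ t ∈ Set.Icc a b, γ * (γ - 1) * t ^ (γ - 2) ≤ K := fun t ht =>
    mul_le_mul_of_nonneg_left (rpow_mem_bounds ha ht _).2 (by positivity)
  set c₀ := (γ - 1) / 2 * fb ^ γ with hc0_def
  have hfbγ : (0:ℝ) < fb ^ γ := Real.rpow_pos_of_pos hfb _
  have hc₀ : 0 < c₀ := mul_pos (by linarith) hfbγ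
  have hfb1 : fb ^ (γ - 1) * fb = fb ^ γ := by
    rw [← Real.rpow_add_one hfb.ne' (γ - 1)]; norm_num
  have hfb1' : (0:ℝ) < fb ^ (γ - 1) := Real.rpow_pos_of_pos hfb _
  have hfb1γ : γ * (fb ^ (γ - 1) * fb) = γ * fb ^ γ := by rw [hfb1]
  have hPi : ∀ x : ℝ, x ^ γ - γ * fb ^ (γ - 1) * x + (γ - 1) * fb ^ γ
      = x ^ γ - fb ^ γ - γ * fb ^ (γ - 1) * (x - fb) := by
    intro x; linear_combination (-γ) * hfb1
  have hTpow : T ^ (γ - 1) = 2 * γ * fb ^ (γ - 1) := by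
    rw [hT_def, Real.mul_rpow (Real.rpow_nonneg (by linarith : (0:ℝ) ≤ 2*γ) _) hfb.le,
      ← Real.rpow_mul (by linarith : (0:ℝ) ≤ 2*γ), one_div, inv_mul_cancel₀ hγ1.ne',
      Real.rpow_one]
  have hPile : ∀ f : ℝ, 0 ≤ f → f ≤ fb →
      f ^ γ - γ * fb ^ (γ - 1) * f + (γ - 1) * fb ^ γ ≤ γ * fb ^ γ := by
    intro f hf hffb
    have h1 : f ^ γ ≤ fb ^ γ := Real.rpow_le_rpow hf hffb hγ0.le
    have h2 : 0 ≤ γ * fb ^ (γ - 1) * f := by positivity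
    linarith
  have hPige : ∀ f : ℝ, 0 ≤ f → f ≤ a →
      c₀ ≤ f ^ γ - γ * fb ^ (γ - 1) * f + (γ - 1) * fb ^ γ := by
    intro f hf hfa
    have h1 : 0 ≤ f ^ γ := Real.rpow_nonneg hf _
    have h2 : γ * fb ^ (γ - 1) * f ≤ γ * fb ^ (γ - 1) * a :=
      mul_le_mul_of_nonneg_left hfa (by positivity)
    have h3 : γ * fb ^ (γ - 1) * a = (γ - 1) / 2 * fb ^ γ := by
      have e : γ * fb ^ (γ - 1) * ((γ - 1) / (2 * γ) * fb)
          = ((γ - 1) * γ / (2 * γ)) * (fb ^ (γ - 1) * fb) := by ring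
      rw [ha_def, e, hfb1, mul_div_mul_right _ _ hγ0.ne']
    rw [hc0_def]
    linarith
  -- constants
  set κ₁ := min (min (min (k/2) (c₀/b^2)) (min (c₀/fb^γ) (k*δ^2/(2*fb^γ))))
      (min (k*δ^2/(2*(b-fb)^γ)) (1/2)) with hκ₁_def
  set κ₂ := max (max (K/2) (γ*fb^γ/(fb-a)^2)) (max (γ*fb^γ/δ^γ) (γ*(1+fb/δ)^γ)) with hκ₂_def
  have hbfb : (0:ℝ) < b - fb := by simp only [hb_def]; linarith
  have hbfbγ : (0:ℝ) < (b - fb) ^ γ := Real.rpow_pos_of_pos hbfb _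
  have hδγ : (0:ℝ) < δ ^ γ := Real.rpow_pos_of_pos hδ _
  have hκ₁pos : 0 < κ₁ := by
    refine lt_min (lt_min (lt_min ?_ ?_) (lt_min ?_ ?_)) (lt_min ?_ ?_)
    · linarith
    · exact div_pos hc₀ (by positivity)
    · exact div_pos hc₀ hfbγ
    · exact div_pos (mul_pos hk (pow_pos hδ 2)) (mul_pos two_pos hfbγ)
    · exact div_pos (mul_pos hk (pow_pos hδ 2)) (mul_pos two_pos hbfbγ)
    · norm_num
  have hκ₂pos : 0 < κ₂ := lt_of_lt_of_le (by linarith : (0:ℝ) < K/2)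
    (le_trans (le_max_left _ _) (le_max_left _ _))
  have h₁a : κ₁ ≤ k/2 :=
    le_trans (min_le_left _ _) (le_trans (min_le_left _ _) (min_le_left _ _))
  have h₁b : κ₁ ≤ c₀/b^2 :=
    le_trans (min_le_left _ _) (le_trans (min_le_left _ _) (min_le_right _ _))
  have h₁c : κ₁ ≤ c₀/fb^γ :=
    le_trans (min_le_left _ _) (le_trans (min_le_right _ _) (min_le_left _ _))
  have h₁d : κ₁ ≤ k*δ^2/(2*fb^γ) :=
    le_trans (min_le_left _ _) (le_trans (min_le_right _ _) (min_le_right _ _))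
  have h₁e : κ₁ ≤ k*δ^2/(2*(b-fb)^γ) := le_trans (min_le_right _ _) (min_le_left _ _)
  have h₁f : κ₁ ≤ 1/2 := le_trans (min_le_right _ _) (min_le_right _ _)
  have h₂a : K/2 ≤ κ₂ := le_trans (le_max_left _ _) (le_max_left _ _)
  have h₂b : γ*fb^γ/(fb-a)^2 ≤ κ₂ := le_trans (le_max_right _ _) (le_max_left _ _)
  have h₂c : γ*fb^γ/δ^γ ≤ κ₂ := le_trans (le_max_left _ _) (le_max_right _ _)
  have h₂d : γ*(1+fb/δ)^γ ≤ κ₂ := le_trans (le_max_right _ _) (le_max_right _ _)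
  clear_value a T b m M k K c₀ κ₁ κ₂
  refine ⟨κ₁, hκ₁pos, κ₂, hκ₂pos, ?_⟩
  intro f hf
  by_cases hcase : |f - fb| ≤ δ
  · simp only [if_pos hcase]
    rw [sq_abs, hPi f]
    have habs := abs_le.1 hcase
    by_cases hfa : a ≤ f
    · have hfI : f ∈ Set.Icc a b := ⟨hfa, by simp only [hb_def]; linarith [habs.2, hT.le]⟩
      have hlow := bregman_lower γ k ha hc_low hfI hfbI
      have hup := bregman_upper γ K ha hc_up hfI hfbI
      constructor
      · calc κ₁ * (f - fb)^2 ≤ k/2 * (f - fb)^2 :=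
              mul_le_mul_of_nonneg_right h₁a (sq_nonneg _)
          _ ≤ _ := hlow
      · calc f ^ γ - fb ^ γ - γ * fb ^ (γ - 1) * (f - fb) ≤ K/2 * (f - fb)^2 := hup
          _ ≤ κ₂ * (f - fb)^2 := mul_le_mul_of_nonneg_right h₂a (sq_nonneg _)
    · push_neg at hfa
      have hffb : f ≤ fb := hfa.le.trans haf.le
      have hPf := hPige f hf hfa.le
      have hPf' := hPile f hf hffb
      rw [hPi f] at hPf hPf'
      constructor
      · have hZ : (f - fb)^2 ≤ b^2 := sq_le_sq' (by linarith) (by linarith)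
        calc κ₁ * (f - fb)^2 ≤ c₀ / b^2 * b^2 :=
              mul_le_mul h₁b hZ (sq_nonneg _) (le_of_lt (div_pos hc₀ (pow_pos hbpos 2)))
          _ = c₀ := div_mul_cancel₀ _ (pow_pos hbpos 2).ne'
          _ ≤ _ := hPf
      · have hZ : (fb - a)^2 ≤ (f - fb)^2 := by
          have e1 : (fb - a)^2 ≤ (fb - f)^2 := pow_le_pow_left₀ (by linarith) (by linarith) 2
          have e2 : (fb - f)^2 = (f - fb)^2 := by ring
          linarith
        calc f ^ γ - fb ^ γ - γ * fb ^ (γ - 1) * (f - fb) ≤ γ * fb ^ γ := hPf'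
          _ = γ * fb ^ γ / (fb - a)^2 * (fb - a)^2 :=
              (div_mul_cancel₀ _ (pow_pos (by linarith : (0:ℝ) < fb - a) 2).ne').symm
          _ ≤ κ₂ * (f - fb)^2 := mul_le_mul h₂b hZ (sq_nonneg _) hκ₂pos.le
  · simp only [if_neg hcase]
    push_neg at hcase
    rw [hPi f]
    rcases le_or_gt f fb with hffb | hffb
    · have habs : |f - fb| = fb - f := by
        rw [abs_sub_comm]; exact abs_of_nonneg (by linarith)
      rw [habs] at hcase ⊢
      have hZub : (fb - f)^γ ≤ fb^γ := Real.rpow_le_rpow (by linarith) (by linarith) hγ0.le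
      have hZlb : δ^γ ≤ (fb - f)^γ := Real.rpow_le_rpow hδ.le hcase.le hγ0.le
      constructor
      · by_cases hfa : a ≤ f
        · have hfI : f ∈ Set.Icc a b := ⟨hfa, hffb.trans hfb_le_b⟩
          have hlow := bregman_lower γ k ha hc_low hfI hfbI
          have hsq : δ^2 ≤ (f - fb)^2 := by
            have e1 : δ^2 ≤ (fb - f)^2 := pow_le_pow_left₀ hδ.le hcase.le 2
            have e2 : (fb - f)^2 = (f - fb)^2 := by ring
            linarith
          have hmul : k*δ^2 ≤ k*(f - fb)^2 := mul_le_mul_of_nonneg_left hsq hk.le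
          calc κ₁ * (fb - f)^γ ≤ k*δ^2/(2*fb^γ) * fb^γ :=
                mul_le_mul h₁d hZub (Real.rpow_nonneg (by linarith) _)
                  (le_of_lt (div_pos (mul_pos hk (pow_pos hδ 2)) (mul_pos two_pos hfbγ)))
            _ = k*δ^2/2 := by
                rw [div_mul_eq_mul_div, mul_div_assoc, mul_comm 2 (fb^γ), ← div_div,
                  div_self hfbγ.ne', mul_one_div]
            _ ≤ _ := by linarith [hlow, hmul]
        · push_neg at hfa
          have hPf := hPige f hf hfa.le
          rw [hPi f] at hPf
          calc κ₁ * (fb - f)^γ ≤ c₀/fb^γ * fb^γ :=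
                mul_le_mul h₁c hZub (Real.rpow_nonneg (by linarith) _)
                  (le_of_lt (div_pos hc₀ hfbγ))
            _ = c₀ := div_mul_cancel₀ _ hfbγ.ne'
            _ ≤ _ := hPf
      · have hPf' := hPile f hf hffb
        rw [hPi f] at hPf'
        calc f ^ γ - fb ^ γ - γ * fb ^ (γ - 1) * (f - fb) ≤ γ * fb ^ γ := hPf'
          _ = γ * fb ^ γ / δ^γ * δ^γ := (div_mul_cancel₀ _ hδγ.ne').symm
          _ ≤ κ₂ * (fb - f)^γ := mul_le_mul h₂c hZlb hδγ.le hκ₂pos.le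
    · have habs : |f - fb| = f - fb := abs_of_pos (by linarith)
      rw [habs] at hcase ⊢
      have hfpos : (0:ℝ) < f := by linarith
      constructor
      · by_cases hfB : f ≤ b
        · have hfI : f ∈ Set.Icc a b := ⟨(haf.trans hffb).le, hfB⟩
          have hlow := bregman_lower γ k ha hc_low hfI hfbI
          have hZub : (f - fb)^γ ≤ (b - fb)^γ :=
            Real.rpow_le_rpow (by linarith) (by linarith) hγ0.le
          have hsq : δ^2 ≤ (f - fb)^2 := pow_le_pow_left₀ hδ.le hcase.le 2
          have hmul : k*δ^2 ≤ k*(f - fb)^2 := mul_le_mul_of_nonneg_left hsq hk.le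
          calc κ₁ * (f - fb)^γ ≤ k*δ^2/(2*(b-fb)^γ) * (b - fb)^γ :=
                mul_le_mul h₁e hZub (Real.rpow_nonneg (by linarith) _)
                  (le_of_lt (div_pos (mul_pos hk (pow_pos hδ 2)) (mul_pos two_pos hbfbγ)))
            _ = k*δ^2/2 := by
                rw [div_mul_eq_mul_div, mul_div_assoc, mul_comm 2 ((b-fb)^γ), ← div_div,
                  div_self hbfbγ.ne', mul_one_div]
            _ ≤ _ := by linarith [hlow, hmul]
        · push_neg at hfB
          have hTf : T ≤ f := by simp only [hb_def] at hfB; linarith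
          have h2γ : 2*γ*fb^(γ-1) ≤ f^(γ-1) := by
            rw [← hTpow]
            exact Real.rpow_le_rpow hT.le hTf (by linarith)
          have hfγ : f^(γ-1) * f = f^γ := by
            rw [← Real.rpow_add_one hfpos.ne' (γ - 1)]; norm_num
          have hhalf : γ * fb^(γ-1) * f ≤ f^γ/2 := by
            have e := mul_le_mul_of_nonneg_right h2γ hf
            rw [hfγ] at e
            linarith
          have hfγpos : (0:ℝ) ≤ f^γ := Real.rpow_nonneg hf _
          have hZub : (f - fb)^γ ≤ f^γ :=
            Real.rpow_le_rpow (by linarith) (by linarith) hγ0.le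
          have hPf : f^γ/2 ≤ f ^ γ - fb ^ γ - γ * fb ^ (γ - 1) * (f - fb) := by
            linarith [hhalf, hfb1γ, mul_nonneg (sub_nonneg.2 hγ.le) hfbγ.le]
          calc κ₁ * (f - fb)^γ ≤ 1/2 * f^γ :=
                mul_le_mul h₁f hZub (Real.rpow_nonneg (by linarith) _) (by norm_num)
            _ ≤ _ := by linarith [hPf]
      · have hkey : f ≤ (1+fb/δ)*(f-fb) := by
          have h1 : fb/δ*δ ≤ fb/δ*(f-fb) :=
            mul_le_mul_of_nonneg_left hcase.le (by positivity)
          have h2 : fb/δ*δ = fb := div_mul_cancel₀ _ hδ.ne'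
          have h3 : fb/δ*(f-fb) = fb/δ*f - fb/δ*fb := by ring
          have h4 : (1+fb/δ)*(f-fb) = (f - fb) + (fb/δ*f - fb/δ*fb) := by ring
          linarith [h1, h2, h3, h4]
        have h1 : f^γ ≤ ((1+fb/δ)*(f-fb))^γ := Real.rpow_le_rpow hf hkey hγ0.le
        have h2 : ((1+fb/δ)*(f-fb))^γ = (1+fb/δ)^γ * (f-fb)^γ :=
          Real.mul_rpow (by positivity) (by linarith)
        have h3 : fb^γ ≤ f^γ := Real.rpow_le_rpow hfb.le hffb.le hγ0.le
        have h4 : 0 ≤ γ * fb ^ (γ - 1) * f := by positivity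
        have hZ0 : (0:ℝ) ≤ (f - fb)^γ := Real.rpow_nonneg (by linarith) _
        calc f ^ γ - fb ^ γ - γ * fb ^ (γ - 1) * (f - fb)
            ≤ γ * f^γ := by
              linarith [hfb1γ, h4, mul_le_mul_of_nonneg_left h3 (by linarith : (0:ℝ) ≤ γ - 1)]
          _ ≤ γ * ((1+fb/δ)^γ * (f-fb)^γ) := by
              rw [← h2]; exact mul_le_mul_of_nonneg_left (h1) hγ0.le
          _ = γ*(1+fb/δ)^γ * (f-fb)^γ := by ring
          _ ≤ κ₂ * (f - fb)^γ := mul_le_mul_of_nonneg_right h₂d hZ0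
end
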